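/- In the Picard lattice ℤ^8 of a degree-2 del Pezzo surface (basis e₀,…,e₇, form diag(1,−1,…,−1), K = −3e₀+e₁+⋯+e₇), for every root D (D·K = 0, D² = −2) the class D − 2K is ample in the numerical sense that (D−2K)² > 0 and (D−2K)·L > 0 for every line class L (L² = L·K = −1). -/

import Mathlib

/-!
Write `E = D - 2K` and `d = D·L`. Since `K² = 2`, `E² = D² + 4K² = 6` and `E·L = d + 2`, so
everything comes down to `d > -2`. The class `x = D - 2L - K` is orthogonal to `K` and has
`x² = -8 - 4d`. By Cauchy–Schwarz on the last seven coordinates, the form is negative definite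
on `K⊥` (the Hodge index theorem), and `x ≠ 0` because `D = 2L + K` would give `D² = -6`.
Hence `x² < 0`, i.e. `d > -2`.
-/

/-- The intersection form of the blowup of P² at 7 points: diag(1,-1,…,-1). -/
def ip8 (x y : Fin 8 → ℤ) : ℤ :=
  x 0 * y 0 - ∑ i : Fin 7, x i.succ * y i.succ

/-- The canonical class K = -3e₀ + e₁ + ⋯ + e₇. -/
def Kdp : Fin 8 → ℤ := fun i => if i = 0 then -3 else 1

lemma ip8_comm (x y : Fin 8 → ℤ) : ip8 x y = ip8 y x := by
  simp only [ip8, mul_comm]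

lemma ip8_add_left (x y z : Fin 8 → ℤ) : ip8 (x + y) z = ip8 x z + ip8 y z := by
  simp only [ip8, Pi.add_apply, add_mul, Finset.sum_add_distrib]
  ring

lemma ip8_sub_left (x y z : Fin 8 → ℤ) : ip8 (x - y) z = ip8 x z - ip8 y z := by
  simp only [ip8, Pi.sub_apply, sub_mul, Finset.sum_sub_distrib]
  ring

lemma ip8_add_right (x y z : Fin 8 → ℤ) : ip8 x (y + z) = ip8 x y + ip8 x z := by
  rw [ip8_comm, ip8_add_left, ip8_comm y, ip8_comm z]

lemma ip8_sub_right (x y z : Fin 8 → ℤ) : ip8 x (y - z) = ip8 x y - ip8 x z := by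
  rw [ip8_comm, ip8_sub_left, ip8_comm y, ip8_comm z]

lemma ip8_Kdp_Kdp : ip8 Kdp Kdp = 2 := by
  decide

lemma ip8_Kdp_right (x : Fin 8 → ℤ) : ip8 x Kdp = -3 * x 0 - ∑ i : Fin 7, x i.succ := by
  simp only [ip8, Kdp, Fin.succ_ne_zero, ↓reduceIte, mul_one]
  ring

lemma ip8_self_neg_of_ip8_Kdp_eq_zero {x : Fin 8 → ℤ} (hK : ip8 x Kdp = 0) (hx : x ≠ 0) :
    ip8 x x < 0 := by
  have hsum : ∑ i : Fin 7, x i.succ = -3 * x 0 := by rw [ip8_Kdp_right] at hK; linarith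
  have hcs : (∑ i : Fin 7, x i.succ) ^ 2 ≤ 7 * ∑ i : Fin 7, x i.succ ^ 2 := by
    simpa using sq_sum_le_card_mul_sum_sq (s := Finset.univ) (f := fun i : Fin 7 ↦ x i.succ)
  have hxx : ip8 x x = x 0 ^ 2 - ∑ i : Fin 7, x i.succ ^ 2 := by simp only [ip8, sq]
  by_contra! hnonneg
  have hx0 : x 0 = 0 := by nlinarith
  have htail : ∀ i : Fin 7, x i.succ = 0 := by
    have hzero : ∑ i : Fin 7, x i.succ ^ 2 = 0 :=
      le_antisymm (by nlinarith) (Finset.sum_nonneg fun i _ ↦ sq_nonneg _)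
    intro i
    exact pow_eq_zero_iff two_ne_zero |>.mp <|
      (Finset.sum_eq_zero_iff_of_nonneg fun i _ ↦ sq_nonneg _).mp hzero i (Finset.mem_univ i)
  exact hx <| funext fun i ↦ Fin.cases hx0 htail i

lemma neg_two_lt_ip8_of_root_of_line {D L : Fin 8 → ℤ} (hDK : ip8 D Kdp = 0) (hDD : ip8 D D = -2)
    (hLL : ip8 L L = -1) (hLK : ip8 L Kdp = -1) : -2 < ip8 D L := by
  set x := D - (L + L) - Kdp
  have hxK : ip8 x Kdp = 0 := by
    simp only [x, ip8_sub_left, ip8_add_left, ip8_Kdp_Kdp, hDK, hLK]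
    norm_num
  have hxx : ip8 x x = -8 - 4 * ip8 D L := by
    simp only [x, ip8_sub_left, ip8_sub_right, ip8_add_left, ip8_add_right]
    rw [ip8_comm L D, ip8_comm Kdp D, ip8_comm Kdp L]
    linear_combination hDD + 4 * hLL - 2 * hDK + 4 * hLK + ip8_Kdp_Kdp
  have hx : x ≠ 0 := by
    intro hx0
    have hD : D = L + L + Kdp := by rw [← sub_eq_zero, ← hx0]; simp only [x]; abel
    have : ip8 D D = -6 := by
      simp only [hD, ip8_add_left, ip8_add_right]
      rw [ip8_comm Kdp L]
      linear_combination 4 * hLL + 4 * hLK + ip8_Kdp_Kdp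
    omega
  linarith [ip8_self_neg_of_ip8_Kdp_eq_zero hxK hx]

/-- For every root D of a degree-2 del Pezzo surface, D - 2K is numerically
ample: (D - 2K)² > 0 and (D - 2K)·L > 0 for every line class L. -/
theorem root_minus_twice_canonical_is_ample
    (D : Fin 8 → ℤ) (hDK : ip8 D Kdp = 0) (hDD : ip8 D D = -2) :
    0 < ip8 (D - 2 • Kdp) (D - 2 • Kdp) ∧
    ∀ L : Fin 8 → ℤ, ip8 L L = -1 → ip8 L Kdp = -1 →
      0 < ip8 (D - 2 • Kdp) L := by
  rw [two_nsmul]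
  constructor
  · simp only [ip8_sub_left, ip8_sub_right, ip8_add_left, ip8_add_right, ip8_Kdp_Kdp]
    rw [ip8_comm Kdp D]
    linarith
  · intro L hLL hLK
    rw [ip8_sub_left, ip8_add_left, ip8_comm Kdp L, hLK]
    linarith [neg_two_lt_ip8_of_root_of_line hDK hDD hLL hLK]
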